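/- Let p ≥ 1, q ≥ 2 and q' = ⌊q/2⌋. For a ∈ ℝ^p and b ∈ ℝ^{q'} let U(a,b) ∈ ℝ^{pq} be the tuple consisting of all sums a_i + b_j and all differences a_i − b_j (1 ≤ i ≤ p, 1 ≤ j ≤ q'), followed by all entries a_i (1 ≤ i ≤ p) if q is odd. Then for every (a,b) ≠ (0,0) one has 2(ρ_C(a) + ρ_{SO_q}(b)) < ρ_C(U(a,b)). (This is the strict Benoist–Kobayashi inequality for the tensor embedding 𝔥 = 𝔰𝔭_p(ℂ) ⊕ 𝔰𝔬_q(ℂ) ⊂ 𝔤 = 𝔰𝔭_{pq}(ℂ).) -/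
import Mathlib


open Finset

/-- `ρ_A(c) = Σ_{i<j} |c_i - c_j|`, written in the permutation-invariant
symmetric form `(1/2) Σ_{i,j} |c_i - c_j|`. -/
noncomputable def rhoA {ι : Type*} [Fintype ι] (c : ι → ℝ) : ℝ :=
  (∑ i, ∑ j, |c i - c j|) / 2

/-- `ρ_B(c) = Σ_{i<j} (|c_i - c_j| + |c_i + c_j|) + Σ_i |c_i|`, written in the
permutation-invariant symmetric form `(1/2) Σ_{i,j} (|c_i - c_j| + |c_i + c_j|)`. -/
noncomputable def rhoB {ι : Type*} [Fintype ι] (c : ι → ℝ) : ℝ :=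
  (∑ i, ∑ j, (|c i - c j| + |c i + c j|)) / 2

/-- `ρ_D(c) = Σ_{i<j} (|c_i - c_j| + |c_i + c_j|) = ρ_B(c) - Σ_i |c_i|`. -/
noncomputable def rhoD {ι : Type*} [Fintype ι] (c : ι → ℝ) : ℝ :=
  rhoB c - ∑ i, |c i|

/-- `ρ_C(c) = Σ_{i<j} (|c_i - c_j| + |c_i + c_j|) + 2 Σ_i |c_i| = ρ_B(c) + Σ_i |c_i|`. -/
noncomputable def rhoC {ι : Type*} [Fintype ι] (c : ι → ℝ) : ℝ :=
  rhoB c + ∑ i, |c i|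

/-- `ρ_{SO_n}` is `ρ_D` for even `n` and `ρ_B` for odd `n`. -/
noncomputable def rhoSO (n : ℕ) {ι : Type*} [Fintype ι] (c : ι → ℝ) : ℝ :=
  if Even n then rhoD c else rhoB c

lemma bk_two_max (x y : ℝ) : |x - y| + |x + y| = 2 * max |x| |y| := by
  rcases abs_cases x with ⟨h1,h2⟩|⟨h1,h2⟩ <;>
  rcases abs_cases y with ⟨h3,h4⟩|⟨h3,h4⟩ <;>
  rcases abs_cases (x - y) with ⟨h5,h6⟩|⟨h5,h6⟩ <;>
  rcases abs_cases (x + y) with ⟨h7,h8⟩|⟨h7,h8⟩ <;>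
  rcases max_cases |x| |y| with ⟨h9,h10⟩|⟨h9,h10⟩ <;>
  linarith

lemma bk_abs_add_le_max (x y : ℝ) : |x| + |y| ≤ max |x + y| |x - y| := by
  rcases le_total 0 x with hx|hx <;> rcases le_total 0 y with hy|hy
  · exact le_max_of_le_left (by rw [abs_of_nonneg hx, abs_of_nonneg hy, abs_of_nonneg (by linarith)])
  · exact le_max_of_le_right (by rw [abs_of_nonneg hx, abs_of_nonpos hy, abs_of_nonneg (by linarith)]; linarith)
  · exact le_max_of_le_right (by rw [abs_of_nonpos hx, abs_of_nonneg hy, abs_of_nonpos (by linarith)]; linarith)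
  · exact le_max_of_le_left (by rw [abs_of_nonpos hx, abs_of_nonpos hy, abs_of_nonpos (by linarith)]; linarith)

lemma bk_star (a b a' b' : ℝ) :
    2 * max |a| |a'| + 2 * max |b| |b'| ≤
      max |a+b| |a'+b'| + max |a+b| |a'-b'| + max |a-b| |a'+b'| + max |a-b| |a'-b'| := by
  have h1 : |a| + |b| ≤ max |a+b| |a-b| := bk_abs_add_le_max a b
  have h2 : |a'| + |b'| ≤ max |a'+b'| |a'-b'| := bk_abs_add_le_max a' b'
  have hX : 2*|b| ≤ |a+b| + |a-b| := by
    have h := abs_add_le (a+b) (b-a)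
    have e2 : |(a+b)+(b-a)| = 2*|b| := by rw [show (a+b)+(b-a) = 2*b by ring, abs_mul]; simp
    rw [e2, abs_sub_comm b a] at h; linarith
  have hY : 2*|b'| ≤ |a'+b'| + |a'-b'| := by
    have h := abs_add_le (a'+b') (b'-a')
    have e2 : |(a'+b')+(b'-a')| = 2*|b'| := by rw [show (a'+b')+(b'-a') = 2*b' by ring, abs_mul]; simp
    rw [e2, abs_sub_comm b' a'] at h; linarith
  rcases max_cases |a| |a'| with ⟨e1,f1⟩|⟨e1,f1⟩ <;>
  rcases max_cases |b| |b'| with ⟨e2,f2⟩|⟨e2,f2⟩ <;>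
  rcases max_cases |a+b| |a-b| with ⟨e3,f3⟩|⟨e3,f3⟩ <;>
  rcases max_cases |a'+b'| |a'-b'| with ⟨e4,f4⟩|⟨e4,f4⟩ <;>
  rw [e3] at h1 <;> rw [e4] at h2 <;> rw [e1, e2] <;>
  linarith [le_max_left |a+b| |a'+b'|, le_max_right |a+b| |a'+b'|,
    le_max_left |a+b| |a'-b'|, le_max_right |a+b| |a'-b'|,
    le_max_left |a-b| |a'+b'|, le_max_right |a-b| |a'+b'|,
    le_max_left |a-b| |a'-b'|, le_max_right |a-b| |a'-b'|,
    abs_nonneg b, abs_nonneg b', abs_nonneg (a+b), abs_nonneg (a-b),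
    abs_nonneg (a'+b'), abs_nonneg (a'-b')]

lemma bk_rhoB_eq {ι : Type*} [Fintype ι] (c : ι → ℝ) :
    rhoB c = ∑ i, ∑ j, max |c i| |c j| := by
  unfold rhoB
  rw [show ∑ i, ∑ j, (|c i - c j| + |c i + c j|) = ∑ i, ∑ j, 2 * max |c i| |c j| from
    Finset.sum_congr rfl fun i _ => Finset.sum_congr rfl fun j _ => bk_two_max _ _]
  simp_rw [← Finset.mul_sum]
  ring

lemma bk_sum_prod_fst {p m : ℕ} (g : Fin p → Fin p → ℝ) :
    ∑ x : Fin p × Fin m, ∑ y : Fin p × Fin m, g x.1 y.1 = (m:ℝ)^2 * ∑ i, ∑ j, g i j := by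
  simp only [Fintype.sum_prod_type, Finset.sum_const, card_univ, Fintype.card_fin,
    nsmul_eq_mul]
  simp_rw [Finset.mul_sum]
  refine Finset.sum_congr rfl fun i _ => Finset.sum_congr rfl fun j _ => by ring

lemma bk_sum_prod_snd {p m : ℕ} (g : Fin m → Fin m → ℝ) :
    ∑ x : Fin p × Fin m, ∑ y : Fin p × Fin m, g x.2 y.2 = (p:ℝ)^2 * ∑ i, ∑ j, g i j := by
  simp only [Fintype.sum_prod_type, Finset.sum_const, card_univ, Fintype.card_fin,
    nsmul_eq_mul]
  simp_rw [Finset.mul_sum]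
  refine Finset.sum_congr rfl fun i _ => Finset.sum_congr rfl fun j _ => by ring

lemma bk_sum_prod_fst1 {p m : ℕ} (g : Fin p → ℝ) :
    ∑ x : Fin p × Fin m, g x.1 = (m:ℝ) * ∑ i, g i := by
  simp only [Fintype.sum_prod_type, Finset.sum_const, card_univ, Fintype.card_fin,
    nsmul_eq_mul]
  simp_rw [Finset.mul_sum]

lemma bk_sum_max_nonneg {α β : Type*} [Fintype α] [Fintype β] (f : α → ℝ) (g : β → ℝ) :
    0 ≤ ∑ x : α, ∑ y : β, max |f x| |g y| :=
  Finset.sum_nonneg fun _ _ => Finset.sum_nonneg fun _ _ =>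
    le_trans (abs_nonneg _) (le_max_left _ _)

set_option maxHeartbeats 1000000 in
/-- Strict Benoist–Kobayashi inequality for the tensor embedding
`𝔥 = 𝔰𝔭_p ⊕ 𝔰𝔬_q ⊂ 𝔤 = 𝔰𝔭_{pq}`. -/
theorem stmt10 (p q : ℕ) (hp : 1 ≤ p) (hq : 2 ≤ q)
    (a : Fin p → ℝ) (b : Fin (q / 2) → ℝ) (hne : ¬(a = 0 ∧ b = 0)) :
    2 * (rhoC a + rhoSO q b) <
      rhoC (Sum.elim (fun x : Fin p × Fin (q / 2) => a x.1 + b x.2)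
        (Sum.elim (fun x : Fin p × Fin (q / 2) => a x.1 - b x.2)
          (fun x : Fin p × Fin (q % 2) => a x.1))) := by
  -- notation
  have hMr : (1:ℝ) ≤ ((q/2 : ℕ) : ℝ) := by
    have : 1 ≤ q / 2 := (Nat.one_le_div_iff (by norm_num)).mpr hq
    exact_mod_cast this
  have hpr : (1:ℝ) ≤ (p : ℝ) := by exact_mod_cast hp
  have hSA0 : (0:ℝ) ≤ ∑ i, |a i| := Finset.sum_nonneg fun _ _ => abs_nonneg _
  have hSB0 : (0:ℝ) ≤ ∑ j, |b j| := Finset.sum_nonneg fun _ _ => abs_nonneg _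
  have hfa0 : (0:ℝ) ≤ ∑ i, ∑ j, max |a i| |a j| := bk_sum_max_nonneg a a
  have hfb0 : (0:ℝ) ≤ ∑ i, ∑ j, max |b i| |b j| := bk_sum_max_nonneg b b
  have hT0 : (0:ℝ) ≤ ∑ i, ∑ j, max |a i| |b j| := bk_sum_max_nonneg a b
  have hMsq : (1:ℝ) ≤ ((q/2 : ℕ) : ℝ)^2 := by nlinarith
  have hpsq : (1:ℝ) ≤ ((p : ℕ) : ℝ)^2 := by nlinarith
  have hMfa : ∑ i, ∑ j, max |a i| |a j| ≤ ((q/2 : ℕ) : ℝ)^2 * ∑ i, ∑ j, max |a i| |a j| :=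
    le_mul_of_one_le_left hfa0 hMsq
  have hpfb : ∑ i, ∑ j, max |b i| |b j| ≤ ((p : ℕ) : ℝ)^2 * ∑ i, ∑ j, max |b i| |b j| :=
    le_mul_of_one_le_left hfb0 hpsq
  have hmSA : ∑ i, |a i| ≤ ((q/2 : ℕ) : ℝ) * ∑ i, |a i| := le_mul_of_one_le_left hSA0 hMr
  -- T bounds
  have hT1 : ((q/2 : ℕ) : ℝ) * ∑ i, |a i| ≤ ∑ i, ∑ j, max |a i| |b j| := by
    rw [Finset.mul_sum]
    refine Finset.sum_le_sum fun i _ => ?_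
    rw [show ((q/2 : ℕ) : ℝ) * |a i| = ∑ _j : Fin (q/2), |a i| by
      simp [Finset.sum_const, card_univ, nsmul_eq_mul]]
    exact Finset.sum_le_sum fun j _ => le_max_left _ _
  have hT2 : ((p : ℕ) : ℝ) * ∑ j, |b j| ≤ ∑ i, ∑ j, max |a i| |b j| := by
    rw [show ((p : ℕ) : ℝ) * ∑ j, |b j| = ∑ _i : Fin p, ∑ j, |b j| by
      simp [Finset.sum_const, card_univ, nsmul_eq_mul]]
    exact Finset.sum_le_sum fun i _ => Finset.sum_le_sum fun j _ => le_max_right _ _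
  have hSAfa : ∑ i, |a i| ≤ ∑ i, ∑ j, max |a i| |a j| := by
    refine Finset.sum_le_sum fun i _ => ?_
    have h := Finset.single_le_sum (f := fun j => max |a i| |a j|)
      (fun j _ => le_trans (abs_nonneg _) (le_max_left _ _)) (Finset.mem_univ i)
    simpa [max_self] using h
  have hSBfb : ∑ j, |b j| ≤ ∑ i, ∑ j, max |b i| |b j| := by
    refine Finset.sum_le_sum fun i _ => ?_
    have h := Finset.single_le_sum (f := fun j => max |b i| |b j|)
      (fun j _ => le_trans (abs_nonneg _) (le_max_left _ _)) (Finset.mem_univ i)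
    simpa [max_self] using h
  -- sum of absolute values of U
  have hSu : ∑ k, |(Sum.elim (fun x : Fin p × Fin (q / 2) => a x.1 + b x.2)
        (Sum.elim (fun x : Fin p × Fin (q / 2) => a x.1 - b x.2)
          (fun x : Fin p × Fin (q % 2) => a x.1))) k|
      = 2 * (∑ i, ∑ j, max |a i| |b j|) + ((q % 2 : ℕ) : ℝ) * ∑ i, |a i| := by
    simp only [Fintype.sum_sum_type, Sum.elim_inl, Sum.elim_inr]
    have e1 : ∑ x : Fin p × Fin (q/2), |a x.1 + b x.2| = ∑ i, ∑ j, |a i + b j| :=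
      Fintype.sum_prod_type _
    have e2 : ∑ x : Fin p × Fin (q/2), |a x.1 - b x.2| = ∑ i, ∑ j, |a i - b j| :=
      Fintype.sum_prod_type _
    have e3 : ∑ x : Fin p × Fin (q % 2), |a x.1| = ((q % 2 : ℕ) : ℝ) * ∑ i, |a i| :=
      bk_sum_prod_fst1 (m := q % 2) (fun i => |a i|)
    rw [e1, e2, e3]
    have e4 : ∑ i, ∑ j, |a i + b j| + ∑ i, ∑ j, |a i - b j|
        = 2 * (∑ i, ∑ j, max |a i| |b j|) := by
      rw [← Finset.sum_add_distrib]
      rw [show (2:ℝ) * (∑ i, ∑ j, max |a i| |b j|) = ∑ i, 2 * ∑ j, max |a i| |b j| by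
        rw [Finset.mul_sum]]
      refine Finset.sum_congr rfl fun i _ => ?_
      rw [← Finset.sum_add_distrib, Finset.mul_sum]
      refine Finset.sum_congr rfl fun j _ => ?_
      have := bk_two_max (a i) (b j)
      linarith
    linarith
  -- lower bound for rhoB of U
  have hF : 2*((q/2 : ℕ) : ℝ)^2 * (∑ i, ∑ j, max |a i| |a j|)
        + 2*((p : ℕ) : ℝ)^2 * (∑ i, ∑ j, max |b i| |b j|)
      ≤ rhoB (Sum.elim (fun x : Fin p × Fin (q / 2) => a x.1 + b x.2)
        (Sum.elim (fun x : Fin p × Fin (q / 2) => a x.1 - b x.2)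
          (fun x : Fin p × Fin (q % 2) => a x.1))) := by
    rw [bk_rhoB_eq]
    simp only [Fintype.sum_sum_type, Sum.elim_inl, Sum.elim_inr, Finset.sum_add_distrib]
    have ea : ∑ x : Fin p × Fin (q/2), ∑ y : Fin p × Fin (q/2), 2 * max |a x.1| |a y.1|
        = ((q/2 : ℕ) : ℝ)^2 * ∑ i, ∑ j, 2 * max |a i| |a j| :=
      bk_sum_prod_fst (m := q/2) (fun i j => 2 * max |a i| |a j|)
    have eb : ∑ x : Fin p × Fin (q/2), ∑ y : Fin p × Fin (q/2), 2 * max |b x.2| |b y.2|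
        = ((p : ℕ) : ℝ)^2 * ∑ i, ∑ j, 2 * max |b i| |b j| :=
      bk_sum_prod_snd (p := p) (fun i j => 2 * max |b i| |b j|)
    have ea2 : ∑ i, ∑ j, 2 * max |a i| |a j| = 2 * ∑ i, ∑ j, max |a i| |a j| := by
      simp_rw [← Finset.mul_sum]
    have eb2 : ∑ i, ∑ j, 2 * max |b i| |b j| = 2 * ∑ i, ∑ j, max |b i| |b j| := by
      simp_rw [← Finset.mul_sum]
    have key : 2*((q/2 : ℕ) : ℝ)^2 * (∑ i, ∑ j, max |a i| |a j|)
        + 2*((p : ℕ) : ℝ)^2 * (∑ i, ∑ j, max |b i| |b j|)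
        ≤ ∑ x : Fin p × Fin (q/2), ∑ y : Fin p × Fin (q/2),
            (max |a x.1 + b x.2| |a y.1 + b y.2| + max |a x.1 - b x.2| |a y.1 + b y.2|
              + max |a x.1 + b x.2| |a y.1 - b y.2| + max |a x.1 - b x.2| |a y.1 - b y.2|) := by
      have step1 : ∑ x : Fin p × Fin (q/2), ∑ y : Fin p × Fin (q/2),
          (2 * max |a x.1| |a y.1| + 2 * max |b x.2| |b y.2|)
          ≤ ∑ x : Fin p × Fin (q/2), ∑ y : Fin p × Fin (q/2),
            (max |a x.1 + b x.2| |a y.1 + b y.2| + max |a x.1 - b x.2| |a y.1 + b y.2|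
              + max |a x.1 + b x.2| |a y.1 - b y.2| + max |a x.1 - b x.2| |a y.1 - b y.2|) :=
        Finset.sum_le_sum fun x _ => Finset.sum_le_sum fun y _ => by
          have := bk_star (a x.1) (b x.2) (a y.1) (b y.2); linarith
      have step2 : ∑ x : Fin p × Fin (q/2), ∑ y : Fin p × Fin (q/2),
          (2 * max |a x.1| |a y.1| + 2 * max |b x.2| |b y.2|)
          = 2*((q/2 : ℕ) : ℝ)^2 * (∑ i, ∑ j, max |a i| |a j|)
            + 2*((p : ℕ) : ℝ)^2 * (∑ i, ∑ j, max |b i| |b j|) := by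
        simp only [Finset.sum_add_distrib]
        rw [ea, eb, ea2, eb2]; ring
      linarith
    have hsplit : ∑ x : Fin p × Fin (q/2), ∑ y : Fin p × Fin (q/2),
          (max |a x.1 + b x.2| |a y.1 + b y.2| + max |a x.1 - b x.2| |a y.1 + b y.2|
            + max |a x.1 + b x.2| |a y.1 - b y.2| + max |a x.1 - b x.2| |a y.1 - b y.2|)
        = (∑ x : Fin p × Fin (q/2), ∑ y : Fin p × Fin (q/2), max |a x.1 + b x.2| |a y.1 + b y.2|)
          + (∑ x : Fin p × Fin (q/2), ∑ y : Fin p × Fin (q/2), max |a x.1 - b x.2| |a y.1 + b y.2|)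
          + (∑ x : Fin p × Fin (q/2), ∑ y : Fin p × Fin (q/2), max |a x.1 + b x.2| |a y.1 - b y.2|)
          + (∑ x : Fin p × Fin (q/2), ∑ y : Fin p × Fin (q/2), max |a x.1 - b x.2| |a y.1 - b y.2|) := by
      simp only [Finset.sum_add_distrib]
    have n3 : (0:ℝ) ≤ ∑ x : Fin p × Fin (q % 2), ∑ y : Fin p × Fin (q / 2), max |a x.1| |a y.1 + b y.2| :=
      bk_sum_max_nonneg _ _
    have n6 : (0:ℝ) ≤ ∑ x : Fin p × Fin (q % 2), ∑ y : Fin p × Fin (q / 2), max |a x.1| |a y.1 - b y.2| :=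
      bk_sum_max_nonneg _ _
    have n7 : (0:ℝ) ≤ ∑ x : Fin p × Fin (q / 2), ∑ y : Fin p × Fin (q % 2), max |a x.1 + b x.2| |a y.1| :=
      bk_sum_max_nonneg _ _
    have n8 : (0:ℝ) ≤ ∑ x : Fin p × Fin (q / 2), ∑ y : Fin p × Fin (q % 2), max |a x.1 - b x.2| |a y.1| :=
      bk_sum_max_nonneg _ _
    have n9 : (0:ℝ) ≤ ∑ x : Fin p × Fin (q % 2), ∑ y : Fin p × Fin (q % 2), max |a x.1| |a y.1| :=
      bk_sum_max_nonneg _ _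
    linarith [key, hsplit, n3, n6, n7, n8, n9]
  -- unfold the goal
  simp only [rhoC, rhoSO, rhoD]
  rw [bk_rhoB_eq a, bk_rhoB_eq b, hSu]
  by_cases hb : b = 0
  · -- case b = 0
    have ha : a ≠ 0 := fun h => hne ⟨h, hb⟩
    obtain ⟨i0, hi0⟩ := Function.ne_iff.mp ha
    have hSApos : 0 < ∑ i, |a i| :=
      Finset.sum_pos' (fun _ _ => abs_nonneg _) ⟨i0, Finset.mem_univ i0, abs_pos.mpr hi0⟩
    have hfapos : 0 < ∑ i, ∑ j, max |a i| |a j| := lt_of_lt_of_le hSApos hSAfa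
    have hF0 : 4*((q/2 : ℕ) : ℝ)^2 * (∑ i, ∑ j, max |a i| |a j|)
        ≤ rhoB (Sum.elim (fun x : Fin p × Fin (q / 2) => a x.1 + b x.2)
          (Sum.elim (fun x : Fin p × Fin (q / 2) => a x.1 - b x.2)
            (fun x : Fin p × Fin (q % 2) => a x.1))) := by
      rw [bk_rhoB_eq]
      simp only [Fintype.sum_sum_type, Sum.elim_inl, Sum.elim_inr, Finset.sum_add_distrib,
        hb, Pi.zero_apply, add_zero, sub_zero]
      have es : ∑ x : Fin p × Fin (q/2), ∑ y : Fin p × Fin (q/2), max |a x.1| |a y.1|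
          = ((q/2 : ℕ) : ℝ)^2 * ∑ i, ∑ j, max |a i| |a j| :=
        bk_sum_prod_fst (m := q/2) (fun i j => max |a i| |a j|)
      have n3 : (0:ℝ) ≤ ∑ x : Fin p × Fin (q%2), ∑ y : Fin p × Fin (q/2), max |a x.1| |a y.1| :=
        bk_sum_max_nonneg _ _
      have n7 : (0:ℝ) ≤ ∑ x : Fin p × Fin (q/2), ∑ y : Fin p × Fin (q%2), max |a x.1| |a y.1| :=
        bk_sum_max_nonneg _ _
      have n9 : (0:ℝ) ≤ ∑ x : Fin p × Fin (q%2), ∑ y : Fin p × Fin (q%2), max |a x.1| |a y.1| :=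
        bk_sum_max_nonneg _ _
      linarith
    have hSB00 : ∑ j, |b j| = 0 := by simp [hb]
    have hfb00 : ∑ i, ∑ j, max |b i| |b j| = 0 := by simp [hb]
    have hMfa4 : 4 * (∑ i, ∑ j, max |a i| |a j|)
        ≤ 4*((q/2 : ℕ) : ℝ)^2 * (∑ i, ∑ j, max |a i| |a j|) := by nlinarith
    have hr0 : (0:ℝ) ≤ ((q % 2 : ℕ) : ℝ) * ∑ i, |a i| := by positivity
    rcases Nat.even_or_odd q with hev | hod
    · rw [if_pos hev]
      linarith [hF0, hT1, hmSA]
    · rw [if_neg (by simp [Nat.even_iff, Nat.odd_iff.mp hod])]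
      linarith [hF0, hT1, hmSA]
  · -- case b ≠ 0
    obtain ⟨j0, hj0⟩ := Function.ne_iff.mp hb
    have hSBpos : 0 < ∑ j, |b j| :=
      Finset.sum_pos' (fun _ _ => abs_nonneg _) ⟨j0, Finset.mem_univ j0, abs_pos.mpr hj0⟩
    have hpSB : ∑ j, |b j| ≤ ((p : ℕ) : ℝ) * ∑ j, |b j| := le_mul_of_one_le_left hSB0 hpr
    rcases Nat.even_or_odd q with hev | hod
    · rw [if_pos hev]
      have h2 : ((q % 2 : ℕ) : ℝ) = 0 := by rw [Nat.even_iff.mp hev]; norm_num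
      rw [h2]
      linarith [hF, hT1, hT2, hMfa, hpfb, hmSA]
    · rw [if_neg (by simp [Nat.even_iff, Nat.odd_iff.mp hod])]
      have h2 : ((q % 2 : ℕ) : ℝ) = 1 := by rw [Nat.odd_iff.mp hod]; norm_num
      rw [h2]
      linarith [hF, hT1, hT2, hMfa, hpfb, hmSA, hpSB]
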